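/- Let A ⊆ ℝ^d be open and C ⊂ A closed in ℝ^d, and H an open affine half-space with σ_H(C) ⊂ A. Then P_H(A \ C) = P_H(A) \ P^H(C). -/

import Mathlib

open Set Metric MeasureTheory
open scoped ENNReal

noncomputable def sigmaH {d : ℕ} (h : EuclideanSpace ℝ (Fin d)) (c : ℝ)
    (x : EuclideanSpace ℝ (Fin d)) : EuclideanSpace ℝ (Fin d) :=
  x + (2 * (c - (inner ℝ x h : ℝ))) • h

def halfSp {d : ℕ} (h : EuclideanSpace ℝ (Fin d)) (c : ℝ) :
    Set (EuclideanSpace ℝ (Fin d)) :=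
  {x | (inner ℝ x h : ℝ) < c}

noncomputable def polz {d : ℕ} (h : EuclideanSpace ℝ (Fin d)) (c : ℝ)
    (A : Set (EuclideanSpace ℝ (Fin d))) : Set (EuclideanSpace ℝ (Fin d)) :=
  ((A ∪ sigmaH h c '' A) ∩ halfSp h c) ∪ (A ∩ sigmaH h c '' A)

noncomputable def dpolz {d : ℕ} (h : EuclideanSpace ℝ (Fin d)) (c : ℝ)
    (A : Set (EuclideanSpace ℝ (Fin d))) : Set (EuclideanSpace ℝ (Fin d)) :=
  ((A ∪ sigmaH h c '' A) ∩ (halfSp h c)ᶜ) ∪ (A ∩ sigmaH h c '' A)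

/-
The identity is pointwise and purely set-theoretic: membership of `x` on either side depends
only on whether `x` and `σ x` lie in `A`, in `C`, and whether `x` lies in `H`. Since `C` and
`σ C` are both inside `A`, a point `x` with `x ∈ C` or `σ x ∈ C` has both `x` and `σ x` in `A`,
and a short case analysis matches the two sides.
-/

theorem inner_sigmaH {d : ℕ} (h : EuclideanSpace ℝ (Fin d)) (c : ℝ) (hh : ‖h‖ = 1)
    (x : EuclideanSpace ℝ (Fin d)) : inner ℝ (sigmaH h c x) h = 2 * c - inner ℝ x h := by
  rw [sigmaH, inner_add_left, real_inner_smul_left, real_inner_self_eq_norm_sq, hh]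
  ring

theorem sigmaH_involutive {d : ℕ} (h : EuclideanSpace ℝ (Fin d)) (c : ℝ) (hh : ‖h‖ = 1) :
    Function.Involutive (sigmaH h c) := by
  intro x
  change sigmaH h c x + (2 * (c - inner ℝ (sigmaH h c x) h)) • h = x
  rw [inner_sigmaH h c hh, sigmaH, add_assoc, ← add_smul,
    show 2 * (c - inner ℝ x h) + 2 * (c - (2 * c - inner ℝ x h)) = 0 by ring,
    zero_smul, add_zero]

theorem Function.Involutive.polarization_diff {α : Type*} {f : α → α}
    (hf : Function.Involutive f) (H A C : Set α) (hCA : C ⊆ A) (hfC : f '' C ⊆ A) :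
    ((A \ C ∪ f '' (A \ C)) ∩ H) ∪ (A \ C ∩ f '' (A \ C)) =
      (((A ∪ f '' A) ∩ H) ∪ (A ∩ f '' A)) \ (((C ∪ f '' C) ∩ Hᶜ) ∪ (C ∩ f '' C)) := by
  ext x
  simp only [hf.image_eq_preimage_symm, mem_union, mem_inter_iff, mem_sdiff, mem_compl_iff,
    mem_preimage]
  have hx : x ∈ C → x ∈ A := @hCA x
  have hfx : f x ∈ C → f x ∈ A := @hCA (f x)
  have hx' : x ∈ C → f x ∈ A := fun hxC => hfC ⟨x, hxC, rfl⟩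
  have hfx' : f x ∈ C → x ∈ A := fun hfxC => hf x ▸ hfC ⟨f x, hfxC, rfl⟩
  tauto

theorem stmt12_general {d : ℕ} (h : EuclideanSpace ℝ (Fin d)) (c : ℝ) (hh : ‖h‖ = 1)
    (A C : Set (EuclideanSpace ℝ (Fin d)))
    (hCA : C ⊆ A) (hσ : sigmaH h c '' C ⊆ A) :
    polz h c (A \ C) = polz h c A \ dpolz h c C :=
  (sigmaH_involutive h c hh).polarization_diff _ A C hCA hσ

/-- Polarization of a punctured domain. -/
theorem stmt12 {d : ℕ} (h : EuclideanSpace ℝ (Fin d)) (c : ℝ) (hh : ‖h‖ = 1)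
    (A C : Set (EuclideanSpace ℝ (Fin d))) (hA : IsOpen A) (hC : IsClosed C)
    (hCA : C ⊆ A) (hσ : sigmaH h c '' C ⊆ A) :
    polz h c (A \ C) = polz h c A \ dpolz h c C :=
  stmt12_general h c hh A C hCA hσ
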